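/- arXiv:2412.09663 — 2 statements merged into one kernel-verified Lean document; each statement's English description precedes it below -/
import Mathlib

section
/- For every α > 0, every non-degenerate normalized class adjacency matrix C with ∑_i c_ii > 0, every pair of indices i ≠ j, and every ε with 0 < ε ≤ 2(1+ε)·c_ij, one has h_unb^α((1+ε)·C − (ε/2)·E_ij − (ε/2)·E_ji) > h_unb^α(C) (hetero-monotonicity: removing heterophilic edges strictly increases the measure). -/
/-- A normalized class adjacency matrix: symmetric, nonnegative entries, entries sum to 1. -/
def IsNCAM {m : ℕ} (C : Matrix (Fin m) (Fin m) ℝ) : Prop :=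
  (∀ i j, C i j = C j i) ∧ (∀ i j, 0 ≤ C i j) ∧ (∑ i : Fin m, ∑ j : Fin m, C i j = 1)

/-- Non-degenerate: at least two nonzero entries. -/
def Nondeg {m : ℕ} (C : Matrix (Fin m) (Fin m) ℝ) : Prop :=
  ∃ p q : Fin m × Fin m, p ≠ q ∧ C p.1 p.2 ≠ 0 ∧ C q.1 q.2 ≠ 0

/-- Unbiased homophily (α = 0). -/
noncomputable def hUnb {m : ℕ} (C : Matrix (Fin m) (Fin m) ℝ) : ℝ :=
  (∑ i : Fin m, ∑ j : Fin m, if i < j then Real.sqrt (C i i * C j j) - C i j else 0) /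
  (∑ i : Fin m, ∑ j : Fin m, if i < j then Real.sqrt (C i i * C j j) + C i j else 0)

/-- Unbiased homophily with parameter α. -/
noncomputable def hUnbAlpha {m : ℕ} (α : ℝ) (C : Matrix (Fin m) (Fin m) ℝ) : ℝ :=
  hUnb C + α * min (∑ i : Fin m, Real.sqrt (C i i)) 1

/-- splitting a conditional sum of differences -/
lemma sum_ite_sub {m : ℕ} (f g : Fin m → Fin m → ℝ) :
    (∑ k : Fin m, ∑ l : Fin m, if k < l then f k l - g k l else 0)
      = (∑ k : Fin m, ∑ l : Fin m, if k < l then f k l else 0)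
        - (∑ k : Fin m, ∑ l : Fin m, if k < l then g k l else 0) := by
  rw [← Finset.sum_sub_distrib]
  refine Finset.sum_congr rfl fun k _ => ?_
  rw [← Finset.sum_sub_distrib]
  refine Finset.sum_congr rfl fun l _ => ?_
  split_ifs <;> simp

/-- splitting a conditional sum of sums -/
lemma sum_ite_add {m : ℕ} (f g : Fin m → Fin m → ℝ) :
    (∑ k : Fin m, ∑ l : Fin m, if k < l then f k l + g k l else 0)
      = (∑ k : Fin m, ∑ l : Fin m, if k < l then f k l else 0)
        + (∑ k : Fin m, ∑ l : Fin m, if k < l then g k l else 0) := by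
  rw [← Finset.sum_add_distrib]
  refine Finset.sum_congr rfl fun k _ => ?_
  rw [← Finset.sum_add_distrib]
  refine Finset.sum_congr rfl fun l _ => ?_
  split_ifs <;> simp

/-- indicator double sum -/
lemma sum_ite_ind {m : ℕ} (a b : Fin m) :
    (∑ k : Fin m, ∑ l : Fin m,
        if k < l then (if a = k ∧ b = l then (1 : ℝ) else 0) else 0)
      = if a < b then 1 else 0 := by
  have h : ∀ k l : Fin m, (if k < l then (if a = k ∧ b = l then (1 : ℝ) else 0) else 0)
      = if a = k then (if b = l then (if k < l then (1 : ℝ) else 0) else 0) else 0 := by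
    intro k l
    by_cases h1 : a = k <;> by_cases h2 : b = l <;> by_cases h3 : k < l <;>
      simp [h1, h2, h3]
  simp only [h]
  simp

/-- hetero-monotonicity of h_unb^α. -/
theorem hetero_monotonicity {m : ℕ} (α : ℝ) (hα : 0 < α)
    (C : Matrix (Fin m) (Fin m) ℝ) (hC : IsNCAM C) (hnd : Nondeg C)
    (hdiag : 0 < ∑ i : Fin m, C i i) (i j : Fin m) (hij : i ≠ j)
    (ε : ℝ) (hε0 : 0 < ε) (hε1 : ε ≤ 2 * (1 + ε) * C i j) :
    hUnbAlpha α
      ((1 + ε) • C - (ε / 2) • Matrix.single i j (1 : ℝ)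
        - (ε / 2) • Matrix.single j i (1 : ℝ)) > hUnbAlpha α C := by
  obtain ⟨hsym, hnn, hsum⟩ := hC
  have h1ε : (0 : ℝ) < 1 + ε := by linarith
  set C' : Matrix (Fin m) (Fin m) ℝ :=
    (1 + ε) • C - (ε / 2) • Matrix.single i j (1 : ℝ)
      - (ε / 2) • Matrix.single j i (1 : ℝ) with hC'def
  have hentry : ∀ k l, C' k l = (1 + ε) * C k l
      - (ε / 2) * (if i = k ∧ j = l then 1 else 0)
      - (ε / 2) * (if j = k ∧ i = l then 1 else 0) := by
    intro k l
    simp [hC'def, Matrix.sub_apply, Matrix.smul_apply, Matrix.single,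
      smul_eq_mul, mul_ite, mul_one, mul_zero]
  have hdiagE : ∀ k, C' k k = (1 + ε) * C k k := by
    intro k
    have h1 : ¬(i = k ∧ j = k) := by rintro ⟨rfl, rfl⟩; exact hij rfl
    have h2 : ¬(j = k ∧ i = k) := by rintro ⟨rfl, rfl⟩; exact hij rfl
    rw [hentry, if_neg h1, if_neg h2]; ring
  set S : ℝ := ∑ k : Fin m, ∑ l : Fin m, if k < l then Real.sqrt (C k k * C l l) else 0
    with hSdef
  set O : ℝ := ∑ k : Fin m, ∑ l : Fin m, if k < l then C k l else 0 with hOdef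
  set T : ℝ := ∑ k : Fin m, Real.sqrt (C k k) with hTdef
  -- aggregate sums for C'
  have hSsum : (∑ k : Fin m, ∑ l : Fin m, if k < l then Real.sqrt (C' k k * C' l l) else 0)
      = (1 + ε) * S := by
    rw [hSdef, Finset.mul_sum]
    refine Finset.sum_congr rfl fun k _ => ?_
    rw [Finset.mul_sum]
    refine Finset.sum_congr rfl fun l _ => ?_
    by_cases h : k < l
    · rw [if_pos h, if_pos h, hdiagE, hdiagE,
        show (1 + ε) * C k k * ((1 + ε) * C l l) = (1 + ε) ^ 2 * (C k k * C l l) by ring,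
        Real.sqrt_mul (sq_nonneg _), Real.sqrt_sq h1ε.le]
    · rw [if_neg h, if_neg h, mul_zero]
  have hOsum : (∑ k : Fin m, ∑ l : Fin m, if k < l then C' k l else 0)
      = (1 + ε) * O - ε / 2 := by
    have expand : ∀ k l : Fin m, (if k < l then C' k l else 0)
        = (1 + ε) * (if k < l then C k l else 0)
          - (ε / 2) * (if k < l then (if i = k ∧ j = l then (1 : ℝ) else 0) else 0)
          - (ε / 2) * (if k < l then (if j = k ∧ i = l then (1 : ℝ) else 0) else 0) := by
      intro k l
      by_cases h : k < l
      · rw [if_pos h, if_pos h, if_pos h, if_pos h, hentry]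
      · rw [if_neg h, if_neg h, if_neg h, if_neg h]; ring
    simp only [expand, Finset.sum_sub_distrib, ← Finset.mul_sum]
    rw [sum_ite_ind i j, sum_ite_ind j i]
    rcases lt_or_gt_of_ne hij with h | h
    · rw [if_pos h, if_neg (asymm h)]; ring
    · rw [if_neg (asymm h), if_pos h]; ring
  have hTsum : (∑ k : Fin m, Real.sqrt (C' k k)) = Real.sqrt (1 + ε) * T := by
    rw [hTdef, Finset.mul_sum]
    refine Finset.sum_congr rfl fun k _ => ?_
    rw [hdiagE, Real.sqrt_mul h1ε.le]
  -- basic positivity facts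
  have hterm : ∀ k l : Fin m, 0 ≤ (if k < l then C k l else 0) := by
    intro k l; split_ifs; exacts [hnn k l, le_rfl]
  have hSnn : 0 ≤ S := by
    refine Finset.sum_nonneg fun k _ => Finset.sum_nonneg fun l _ => ?_
    split_ifs; exacts [Real.sqrt_nonneg _, le_rfl]
  have hCij : 0 < C i j := by nlinarith
  have hOge : C i j ≤ O := by
    have key : ∀ a b : Fin m, a < b → C a b ≤ O := by
      intro a b hab
      calc C a b = (if a < b then C a b else 0) := by rw [if_pos hab]
        _ ≤ ∑ l : Fin m, if a < l then C a l else 0 :=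
            Finset.single_le_sum (fun l _ => hterm a l) (Finset.mem_univ b)
        _ ≤ O := Finset.single_le_sum
            (fun k _ => Finset.sum_nonneg fun l _ => hterm k l) (Finset.mem_univ a)
    rcases lt_or_gt_of_ne hij with h | h
    · exact key i j h
    · rw [hsym i j]; exact key j i h
  have hOpos : 0 < O := lt_of_lt_of_le hCij hOge
  have hhalf : ε / 2 ≤ (1 + ε) * C i j := by linarith
  have hD'nn : 0 ≤ (1 + ε) * O - ε / 2 := by nlinarith
  obtain ⟨k0, hk0⟩ : ∃ k, 0 < C k k := by
    by_contra h
    push_neg at h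
    have : (∑ k : Fin m, C k k) ≤ 0 := Finset.sum_nonpos fun k _ => h k
    linarith
  have hT0 : 0 < T :=
    lt_of_lt_of_le (Real.sqrt_pos.mpr hk0)
      (Finset.single_le_sum (f := fun k => Real.sqrt (C k k))
        (fun k _ => Real.sqrt_nonneg _) (Finset.mem_univ k0))
  have hsq1 : (1 : ℝ) ≤ Real.sqrt (1 + ε) := Real.one_le_sqrt.mpr (by linarith)
  have hT'ge : T ≤ Real.sqrt (1 + ε) * T := le_mul_of_one_le_left hT0.le hsq1
  have hminle : min T 1 ≤ min (Real.sqrt (1 + ε) * T) 1 := min_le_min hT'ge le_rfl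
  -- expressions for hUnb
  have hUnbC : hUnb C = (S - O) / (S + O) := by
    rw [hUnb, sum_ite_sub (fun k l => Real.sqrt (C k k * C l l)) (fun k l => C k l),
      sum_ite_add (fun k l => Real.sqrt (C k k * C l l)) (fun k l => C k l)]
  have hUnbC' : hUnb C' = ((1 + ε) * S - ((1 + ε) * O - ε / 2))
      / ((1 + ε) * S + ((1 + ε) * O - ε / 2)) := by
    rw [hUnb, sum_ite_sub (fun k l => Real.sqrt (C' k k * C' l l)) (fun k l => C' k l),
      sum_ite_add (fun k l => Real.sqrt (C' k k * C' l l)) (fun k l => C' k l),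
      hSsum, hOsum]
  have hAlphaC : hUnbAlpha α C = (S - O) / (S + O) + α * min T 1 := by
    rw [hUnbAlpha, hUnbC, hTdef]
  have hAlphaC' : hUnbAlpha α C' = ((1 + ε) * S - ((1 + ε) * O - ε / 2))
      / ((1 + ε) * S + ((1 + ε) * O - ε / 2)) + α * min (Real.sqrt (1 + ε) * T) 1 := by
    rw [hUnbAlpha, hUnbC', hTsum]
  rw [gt_iff_lt, hAlphaC, hAlphaC']
  rcases eq_or_lt_of_le hSnn with hS | hS
  · -- S = 0 : the homophily parts are ≥ -1 and = -1; strictness from the α-term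
    have hT1 : T < 1 := by
      -- all diagonal entries other than k0 vanish
      have hzero : ∀ l : Fin m, l ≠ k0 → C l l = 0 := by
        have hterm0 : ∀ k l : Fin m, k < l → C k k * C l l = 0 := by
          intro k l hkl
          have hall : ∀ k ∈ Finset.univ, (0:ℝ) ≤ ∑ l : Fin m,
              if k < l then Real.sqrt (C k k * C l l) else 0 := fun k _ =>
            Finset.sum_nonneg fun l _ => by
              split_ifs; exacts [Real.sqrt_nonneg _, le_rfl]
          have hinner : (∑ l : Fin m, if k < l then Real.sqrt (C k k * C l l) else 0) = 0 :=
            (Finset.sum_eq_zero_iff_of_nonneg hall).mp hS.symm k (Finset.mem_univ k)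
          have hall2 : ∀ l ∈ Finset.univ, (0:ℝ) ≤
              (if k < l then Real.sqrt (C k k * C l l) else 0) := fun l _ => by
            split_ifs; exacts [Real.sqrt_nonneg _, le_rfl]
          have := (Finset.sum_eq_zero_iff_of_nonneg hall2).mp hinner l (Finset.mem_univ l)
          rw [if_pos hkl] at this
          exact (Real.sqrt_eq_zero (mul_nonneg (hnn k k) (hnn l l))).mp this
        intro l hl
        have hprod : C k0 k0 * C l l = 0 := by
          rcases lt_or_gt_of_ne (Ne.symm hl) with h | h
          · exact hterm0 k0 l h
          · have := hterm0 l k0 h; linarith [this, mul_comm (C l l) (C k0 k0)]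
        rcases mul_eq_zero.mp hprod with h | h
        · exact absurd h hk0.ne'
        · exact h
      have hTeq : T = Real.sqrt (C k0 k0) := by
        rw [hTdef]
        refine Finset.sum_eq_single k0 (fun l _ hl => ?_) (fun h => absurd (Finset.mem_univ k0) h)
        rw [hzero l hl, Real.sqrt_zero]
      -- C k0 k0 + C i j ≤ 1
      have hrow_nn : ∀ k : Fin m, 0 ≤ ∑ l : Fin m, C k l :=
        fun k => Finset.sum_nonneg fun l _ => hnn k l
      have hrowi : C i i + C i j ≤ ∑ l : Fin m, C i l := by
        have hsub : ({i, j} : Finset (Fin m)) ⊆ Finset.univ := Finset.subset_univ _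
        have := Finset.sum_le_sum_of_subset_of_nonneg hsub
          (fun l _ _ => hnn i l)
        rwa [Finset.sum_pair hij] at this
      have hbound : C k0 k0 + C i j ≤ 1 := by
        by_cases hk0i : k0 = i
        · subst hk0i
          calc C k0 k0 + C k0 j ≤ ∑ l : Fin m, C k0 l := hrowi
            _ ≤ ∑ k : Fin m, ∑ l : Fin m, C k l :=
                Finset.single_le_sum (fun k _ => hrow_nn k) (Finset.mem_univ k0)
            _ = 1 := hsum
        · have h1 : C k0 k0 ≤ ∑ l : Fin m, C k0 l :=
            Finset.single_le_sum (fun l _ => hnn k0 l) (Finset.mem_univ k0)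
          have h2 : C i j ≤ ∑ l : Fin m, C i l :=
            Finset.single_le_sum (fun l _ => hnn i l) (Finset.mem_univ j)
          have h3 : (∑ l : Fin m, C k0 l) + (∑ l : Fin m, C i l)
              ≤ ∑ k : Fin m, ∑ l : Fin m, C k l := by
            have hsub : ({k0, i} : Finset (Fin m)) ⊆ Finset.univ := Finset.subset_univ _
            have := Finset.sum_le_sum_of_subset_of_nonneg hsub
              (fun k _ _ => hrow_nn k)
            rwa [Finset.sum_pair hk0i] at this
          linarith [hsum]
      have : C k0 k0 < 1 := by linarith
      rw [hTeq]
      exact (Real.sqrt_lt' one_pos).mpr (by linarith)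
    have hT'gt : T < min (Real.sqrt (1 + ε) * T) 1 := by
      refine lt_min ?_ hT1
      have : (1 : ℝ) < Real.sqrt (1 + ε) := by
        have := Real.sqrt_lt_sqrt (by norm_num : (0:ℝ) ≤ 1) (show (1:ℝ) < 1 + ε by linarith)
        rwa [Real.sqrt_one] at this
      exact (lt_mul_iff_one_lt_left hT0).mpr this
    have hminT : min T 1 = T := min_eq_left hT1.le
    have hL : (S - O) / (S + O) = -1 := by
      rw [← hS, zero_sub, zero_add, neg_div, div_self hOpos.ne']
    have hR : -1 ≤ ((1 + ε) * S - ((1 + ε) * O - ε / 2))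
        / ((1 + ε) * S + ((1 + ε) * O - ε / 2)) := by
      rw [← hS, mul_zero, zero_sub, zero_add]
      rcases eq_or_lt_of_le hD'nn with h0 | h0
      · rw [← h0, neg_zero, zero_div]; norm_num
      · rw [neg_div, div_self h0.ne']
    have hαlt : α * min T 1 < α * min (Real.sqrt (1 + ε) * T) 1 := by
      rw [hminT]; exact mul_lt_mul_of_pos_left hT'gt hα
    rw [hL]
    calc -1 + α * min T 1 < -1 + α * min (Real.sqrt (1 + ε) * T) 1 :=
          add_lt_add_right hαlt _
      _ ≤ _ := add_le_add_left hR _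
  · -- S > 0 : the homophily part strictly increases, the α-term weakly increases
    have hD : 0 < S + O := by linarith
    have hD' : 0 < (1 + ε) * S + ((1 + ε) * O - ε / 2) := by nlinarith
    have hfrac : (S - O) / (S + O)
        < ((1 + ε) * S - ((1 + ε) * O - ε / 2)) / ((1 + ε) * S + ((1 + ε) * O - ε / 2)) := by
      rw [div_lt_div_iff₀ hD hD']
      have key : ((1 + ε) * S - ((1 + ε) * O - ε / 2)) * (S + O)
          - (S - O) * ((1 + ε) * S + ((1 + ε) * O - ε / 2)) = ε * S := by ring
      have hpos : 0 < ε * S := mul_pos hε0 hS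
      linarith
    have hαle : α * min T 1 ≤ α * min (Real.sqrt (1 + ε) * T) 1 :=
      mul_le_mul_of_nonneg_left hminle hα.le
    exact add_lt_add_of_lt_of_le hfrac hαle
end

section
/- For every non-degenerate normalized class adjacency matrix C, the matrix rand(C) with entries rand(C)_{ij} = a_i·a_j (where a_i = ∑_k c_ik) satisfies h_unb(rand(C)) = 0 (constant baseline for unbiased homophily with α = 0). -/
/-- rand(C) for undirected graphs: rand(C)_{ij} = a_i · a_j where a_i = ∑_k c_{ik}. -/
noncomputable def randM {m : ℕ} (C : Matrix (Fin m) (Fin m) ℝ) : Matrix (Fin m) (Fin m) ℝ :=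
  Matrix.of fun i j => (∑ k : Fin m, C i k) * (∑ k : Fin m, C j k)

open Matrix

theorem hUnb_eq_zero_of_forall_lt_eq_sqrt {m : ℕ} {C : Matrix (Fin m) (Fin m) ℝ}
    (h : ∀ i j, i < j → C i j = √(C i i * C j j)) : hUnb C = 0 := by
  have hnum : (∑ i : Fin m, ∑ j : Fin m,
      if i < j then √(C i i * C j j) - C i j else 0) = 0 :=
    Finset.sum_eq_zero fun i _ => Finset.sum_eq_zero fun j _ => by
      split_ifs with hij
      · rw [h i j hij, sub_self]
      · rfl
  rw [hUnb, hnum, zero_div]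

theorem vecMulVec_self_apply_eq_sqrt {ι : Type*} {a : ι → ℝ} (ha : 0 ≤ a) (i j : ι) :
    vecMulVec a a i j = √(vecMulVec a a i i * vecMulVec a a j j) := by
  simp only [vecMulVec_apply]
  rw [show a i * a i * (a j * a j) = (a i * a j) ^ 2 by ring,
    Real.sqrt_sq (mul_nonneg (ha i) (ha j))]

theorem randM_eq_vecMulVec {m : ℕ} (C : Matrix (Fin m) (Fin m) ℝ) :
    randM C = vecMulVec (fun i => ∑ k, C i k) (fun i => ∑ k, C i k) :=
  rfl

theorem constant_baseline_unb_general {m : ℕ}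
    (C : Matrix (Fin m) (Fin m) ℝ) (hC : IsNCAM C) :
    hUnb (randM C) = 0 := by
  have hdeg_nonneg : 0 ≤ fun i => ∑ k, C i k := fun i =>
    Finset.sum_nonneg fun k _ => hC.2.1 i k
  rw [randM_eq_vecMulVec]
  exact hUnb_eq_zero_of_forall_lt_eq_sqrt fun i j _ =>
    vecMulVec_self_apply_eq_sqrt hdeg_nonneg i j

/-- constant baseline for unbiased homophily with α = 0. -/
theorem constant_baseline_unb {m : ℕ}
    (C : Matrix (Fin m) (Fin m) ℝ) (hC : IsNCAM C) (hnd : Nondeg C) :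
    hUnb (randM C) = 0 :=
  constant_baseline_unb_general C hC
end
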